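/- arXiv:1812.10850 — 2 statements merged into one kernel-verified Lean document; each statement's English description precedes it below -/
import Mathlib

section
/- Let Λ₄ ⊆ ℕ be the set of all natural numbers expressible as finite sums ∑_k α_k 4^k with digits α_k ∈ {0,1} (equivalently, naturals all of whose base-4 digits are 0 or 1). Then for every complex number s with |s| < 1, the family (s^λ)_{λ∈Λ₄} is summable, the infinite product ∏_{n=0}^{∞} (1 + s^{4^n}) converges, and ∑_{λ∈Λ₄} s^λ = ∏_{n=0}^{∞} (1 + s^{4^n}). -/
/-- The set `Λ₄` of natural numbers expressible as finite sums `∑ α_k 4^k` with digits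
`α_k ∈ {0,1}`. -/
def Lambda4 : Set ℕ :=
  {m | ∃ (n : ℕ) (α : ℕ → ℕ), (∀ k, α k = 0 ∨ α k = 1) ∧
    m = ∑ k ∈ Finset.range n, α k * 4 ^ k}

/-!
Expanding `∏_{n ∈ F} (1 + s^{b^n})` over the subsets `A ⊆ F` gives `∑_A s^{∑_{k ∈ A} b^k}`, so the
infinite product is the sum of `s^{e(A)}` over all finsets `A ⊆ ℕ`, with `e(A) = ∑_{k ∈ A} b^k`.
For `b ≥ 2`, uniqueness of base-`b` expansions makes `e` injective, hence this family is a
reindexed subfamily of the geometric series and is summable for `‖s‖ < 1`. For `b = 4` the range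
of `e` is exactly `Λ₄`.
-/

open Finset

theorem lambda4_eq_range_geomSum : Lambda4 = Set.range fun A : Finset ℕ ↦ ∑ k ∈ A, 4 ^ k := by
  ext m
  constructor
  · rintro ⟨n, α, hα, rfl⟩
    refine ⟨(range n).filter (α · = 1), ?_⟩
    simp only [sum_filter]
    refine sum_congr rfl fun k _ ↦ ?_
    rcases hα k with h | h <;> simp [h]
  · rintro ⟨A, rfl⟩
    refine ⟨A.sup id + 1, fun k ↦ if k ∈ A then 1 else 0, fun k ↦ by by_cases k ∈ A <;> simp [*], ?_⟩
    have hA : A ⊆ range (A.sup id + 1) := fun k hk ↦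
      mem_range_succ_iff.mpr (le_sup (f := id) hk)
    simp only [ite_mul, one_mul, zero_mul, sum_ite_mem, inter_eq_right.mpr hA]

theorem summable_pow_geomSum {R : Type*} [NormedRing R] [CompleteSpace R] {s : R} (hs : ‖s‖ < 1)
    {b : ℕ} (hb : 2 ≤ b) : Summable fun A : Finset ℕ ↦ s ^ ∑ k ∈ A, b ^ k :=
  (summable_geometric_of_norm_lt_one hs).comp_injective (Finset.geomSum_injective hb)

theorem hasProd_one_add_pow_pow {R : Type*} [CommSemiring R] [TopologicalSpace R] {s a : R}
    {b : ℕ} (h : HasSum (fun A : Finset ℕ ↦ s ^ ∑ k ∈ A, b ^ k) a) :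
    HasProd (fun n : ℕ ↦ 1 + s ^ b ^ n) a :=
  hasProd_one_add_of_hasSum_prod (by simpa only [prod_pow_eq_pow_sum] using h)

/-- For `|s| < 1` the generating function of `Λ₄` has the infinite-product
representation `∑_{λ∈Λ₄} s^λ = ∏_{n=0}^∞ (1 + s^{4^n})`. -/
theorem stmt12 (s : ℂ) (hs : ‖s‖ < 1) :
    Summable (fun l : Lambda4 => s ^ (l : ℕ)) ∧
    Multipliable (fun n : ℕ => 1 + s ^ (4 ^ n)) ∧
    ∑' l : Lambda4, s ^ (l : ℕ) = ∏' n : ℕ, (1 + s ^ (4 ^ n)) := by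
  obtain ⟨T, hT⟩ := summable_pow_geomSum hs (b := 4) (by norm_num)
  have hsum : HasSum (fun l : Lambda4 ↦ s ^ (l : ℕ)) T := by
    rw [lambda4_eq_range_geomSum]
    exact (Finset.geomSum_injective (by norm_num)).hasSum_range_iff.mpr hT
  have hprod : HasProd (fun n : ℕ ↦ 1 + s ^ 4 ^ n) T := hasProd_one_add_pow_pow hT
  exact ⟨hsum.summable, hprod.multipliable, hsum.tsum_eq.trans hprod.tprod_eq.symm⟩
end

section
/- Let (x_j)_{j∈ℕ} be a strictly increasing sequence of real numbers with 0 < x_0, and let (y_j)_{j∈ℕ} be real numbers such that the series ∑_{j∈ℕ} (y_{j+1} − y_j)² / (x_{j+1} − x_j) converges (is summable). Then there exists a measurable function g : ℝ → ℝ, square-integrable on (0,∞), such that ∫_{(0, x_j]} g(t) dt = y_j for every j ∈ ℕ. Equivalently, the interpolation problem f(x_j) = y_j for all j is solvable by a function f in the Cameron–Martin space of the kernel K(x,y) = min(x,y) on [0,∞). -/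
open MeasureTheory

/-!
Take for `g` the derivative of the piecewise linear spline through `(0, 0), (x 0, y 0),
(x 1, y 1), …`: the step function equal to the slope `(y (j+1) - y j) / (x (j+1) - x j)` on
`(x j, x (j+1)]` and to `0` beyond `sup x`. Its integral over `(0, x j]` telescopes to `y j`, and
the integral of `g ^ 2` is `y 0 ^ 2 / x 0 + ∑ j, (y (j+1) - y j) ^ 2 / (x (j+1) - x j) < ∞`.
-/

open Set

noncomputable section

def stepFun (a c : ℕ → ℝ) (t : ℝ) : ℝ :=
  ∑' j, (Ioc (a j) (a (j + 1))).indicator (fun _ => c j) t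

section StepFun

variable {a : ℕ → ℝ} (c : ℕ → ℝ)

theorem stepFun_of_mem (ha : Monotone a) {j : ℕ} {t : ℝ} (ht : t ∈ Ioc (a j) (a (j + 1))) :
    stepFun a c t = c j := by
  refine (tsum_eq_single j fun i hi => indicator_of_notMem ?_ _).trans (indicator_of_mem ht _)
  have hdisj : Disjoint (Ioc (a j) (a (j + 1))) (Ioc (a i) (a (i + 1))) :=
    ha.pairwise_disjoint_on_Ioc_succ hi.symm
  exact disjoint_left.1 hdisj ht

theorem stepFun_of_forall_notMem {t : ℝ} (ht : ∀ j, t ∉ Ioc (a j) (a (j + 1))) :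
    stepFun a c t = 0 := by
  simp [stepFun, indicator_of_notMem (ht _)]

theorem comp_stepFun (ha : Monotone a) {φ : ℝ → ℝ} (hφ : φ 0 = 0) (t : ℝ) :
    φ (stepFun a c t) = stepFun a (fun j => φ (c j)) t := by
  by_cases ht : ∃ j, t ∈ Ioc (a j) (a (j + 1))
  · obtain ⟨j, hj⟩ := ht
    rw [stepFun_of_mem c ha hj, stepFun_of_mem _ ha hj]
  · push Not at ht
    rw [stepFun_of_forall_notMem c ht, stepFun_of_forall_notMem _ ht, hφ]

theorem measurable_stepFun : Measurable (stepFun a c) :=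
  Measurable.tsum fun _ => measurable_const.indicator measurableSet_Ioc

theorem setIntegral_stepFun_Ioc (ha : Monotone a) (j : ℕ) :
    ∫ t in Ioc (a j) (a (j + 1)), stepFun a c t = (a (j + 1) - a j) * c j := by
  rw [setIntegral_congr_fun measurableSet_Ioc fun t ht => stepFun_of_mem c ha ht,
    setIntegral_const, Real.volume_real_Ioc_of_le (ha j.le_succ), smul_eq_mul]

theorem integrableOn_stepFun_Ioc (ha : Monotone a) (j : ℕ) :
    IntegrableOn (stepFun a c) (Ioc (a j) (a (j + 1))) :=
  (integrableOn_const (by simp)).congr_fun (fun _ ht => (stepFun_of_mem c ha ht).symm)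
    measurableSet_Ioc

theorem setIntegral_stepFun_Ioc_zero (ha : Monotone a) (n : ℕ) :
    ∫ t in Ioc (a 0) (a n), stepFun a c t = ∑ j ∈ Finset.range n, (a (j + 1) - a j) * c j := by
  rw [← intervalIntegral.integral_of_le (ha n.zero_le),
    ← intervalIntegral.sum_integral_adjacent_intervals fun j _ =>
      (intervalIntegrable_iff_integrableOn_Ioc_of_le (ha j.le_succ)).2
        (integrableOn_stepFun_Ioc c ha j)]
  refine Finset.sum_congr rfl fun j _ => ?_
  rw [intervalIntegral.integral_of_le (ha j.le_succ), setIntegral_stepFun_Ioc c ha]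

theorem integrable_stepFun (ha : Monotone a)
    (hc : Summable fun j => (a (j + 1) - a j) * |c j|) : Integrable (stepFun a c) := by
  have hnorm : ∀ j, ∫ t in Ioc (a j) (a (j + 1)), ‖stepFun a c t‖ = (a (j + 1) - a j) * |c j| :=
    fun j => by
      simpa only [Real.norm_eq_abs, comp_stepFun c ha abs_zero] using
        setIntegral_stepFun_Ioc (fun j => |c j|) ha j
  have hU : IntegrableOn (stepFun a c) (⋃ j, Ioc (a j) (a (j + 1))) :=
    integrableOn_iUnion_of_summable_integral_norm (integrableOn_stepFun_Ioc c ha)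
      (by simpa only [hnorm] using hc)
  refine integrableOn_univ.1 (hU.of_forall_sdiff_eq_zero MeasurableSet.univ fun t ht => ?_)
  exact stepFun_of_forall_notMem c (by simpa using ht.2)

end StepFun

theorem exists_sq_integrable_interpolant {a b : ℕ → ℝ} (ha : StrictMono a)
    (hsum : Summable fun j => (b (j + 1) - b j) ^ 2 / (a (j + 1) - a j)) :
    ∃ g : ℝ → ℝ, Measurable g ∧ Integrable (fun t => g t ^ 2) ∧
      ∀ n, ∫ t in Ioc (a 0) (a n), g t = b n - b 0 := by
  set c : ℕ → ℝ := fun j => (b (j + 1) - b j) / (a (j + 1) - a j)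
  have hgap : ∀ j, a (j + 1) - a j ≠ 0 := fun j => (sub_pos.2 (ha j.lt_succ_self)).ne'
  have hsq : ∀ j, (a (j + 1) - a j) * |c j ^ 2| = (b (j + 1) - b j) ^ 2 / (a (j + 1) - a j) :=
    fun j => by rw [abs_of_nonneg (sq_nonneg _), div_pow]; field_simp [hgap j]
  have hincr : ∀ j, (a (j + 1) - a j) * c j = b (j + 1) - b j :=
    fun j => mul_div_cancel₀ _ (hgap j)
  refine ⟨stepFun a c, measurable_stepFun c, ?_, fun n => ?_⟩
  · simp_rw [comp_stepFun c ha.monotone (φ := fun s => s ^ 2) (zero_pow two_ne_zero)]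
    exact integrable_stepFun _ ha.monotone (by simpa only [hsq] using hsum)
  · rw [setIntegral_stepFun_Ioc_zero c ha.monotone, Finset.sum_congr rfl fun j _ => hincr j,
      Finset.sum_range_sub]

end

/-- Solvability of the interpolation problem `f(x_j) = y_j` in the Cameron–Martin space
of the Brownian-motion kernel `K(x,y) = min x y`: if
`∑_j (y_{j+1} − y_j)² / (x_{j+1} − x_j) < ∞`, then there is a square-integrable `g` on
`(0,∞)` with `∫_{(0, x_j]} g = y_j` for all `j`. -/
theorem stmt19 (x : ℕ → ℝ) (hmono : StrictMono x) (hpos : 0 < x 0)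
    (y : ℕ → ℝ)
    (hsum : Summable (fun j => (y (j + 1) - y j) ^ 2 / (x (j + 1) - x j))) :
    ∃ g : ℝ → ℝ, Measurable g ∧
      IntegrableOn (fun t => g t ^ 2) (Set.Ioi (0 : ℝ)) ∧
      ∀ j : ℕ, ∫ t in Set.Ioc (0 : ℝ) (x j), g t = y j := by
  -- Prepending the knot `(0, 0)` makes the first piece `(0, x 0]` one like the others.
  let a : ℕ → ℝ := fun | 0 => 0 | n + 1 => x n
  let b : ℕ → ℝ := fun | 0 => 0 | n + 1 => y n
  have ha : StrictMono a := strictMono_nat_of_lt_succ fun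
    | 0 => hpos
    | n + 1 => hmono n.lt_succ_self
  obtain ⟨g, hg, hg2, hgb⟩ := exists_sq_integrable_interpolant (b := b) ha
    ((summable_nat_add_iff 1).1 hsum)
  exact ⟨g, hg, hg2.integrableOn, fun j => by simpa [a, b] using hgb (j + 1)⟩
end
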